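/- Let Ω, Θ be bounded open convex sets in ℝ^{n+1} with closure(Θ) ⊆ Ω, and let Φ : closure(Ω) → [0,∞) be concave. Then there exists a concave function Φ̃ : closure(Ω) → [0,∞) such that Φ̃ = Φ on closure(Θ) and Φ̃ = 0 on the boundary ∂Ω. -/

import Mathlib

open Metric Set Bornology

/-- The distance to the complement of an open convex set is concave on the closure. -/
lemma infDist_compl_concave {E : Type*} [NormedAddCommGroup E] [NormedSpace ℝ E]
    {Ω : Set E} (hΩo : IsOpen Ω) (hΩc : Convex ℝ Ω) :
    ConcaveOn ℝ (closure Ω) (fun x => infDist x Ωᶜ) := by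
  have hball : ∀ x : E, ball x (infDist x Ωᶜ) ⊆ Ω := by
    intro x w hw
    by_contra hWc
    have h1 : dist x w < infDist x Ωᶜ := by rw [dist_comm]; exact mem_ball.1 hw
    exact notMem_of_dist_lt_infDist h1 hWc
  have key : ∀ (x y : E) (a b : ℝ), y ∈ closure Ω → 0 < a → 0 ≤ b → a + b = 1 →
      0 < a * infDist x Ωᶜ → ∀ w ∈ Ωᶜ,
      a * infDist x Ωᶜ + b * infDist y Ωᶜ ≤ dist (a • x + b • y) w := by
    intro x y a b hy ha hb hab hadx w hw
    set dx := infDist x Ωᶜ with hdx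
    set dy := infDist y Ωᶜ with hdy
    set D := a * dx + b * dy with hDdef
    by_contra h
    push_neg at h
    have hdy0 : 0 ≤ dy := infDist_nonneg
    have hD : 0 < D := by nlinarith
    have hdxpos : 0 < dx := by nlinarith
    set v := w - (a • x + b • y) with hv
    have hvn : ‖v‖ < D := by
      rw [hv, ← dist_eq_norm, dist_comm]
      exact h
    set z₁ := x + (dx / D) • v with hz₁
    set z₂ := y + (dy / D) • v with hz₂
    have hz₁Ω : z₁ ∈ interior Ω := by
      rw [hΩo.interior_eq]
      apply hball x
      rw [mem_ball, dist_eq_norm, hz₁, add_sub_cancel_left, norm_smul,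
        Real.norm_eq_abs, abs_of_pos (by positivity)]
      calc dx / D * ‖v‖ < dx / D * D := by
            apply mul_lt_mul_of_pos_left hvn (by positivity)
        _ = dx := by field_simp
    have hz₂Ω : z₂ ∈ closure Ω := by
      rcases eq_or_lt_of_le hdy0 with h0 | hdypos
      · rw [hz₂, ← h0]
        simpa using hy
      · apply subset_closure
        apply hball y
        rw [mem_ball, dist_eq_norm, hz₂, add_sub_cancel_left, norm_smul,
          Real.norm_eq_abs, abs_of_pos (by positivity)]
        calc dy / D * ‖v‖ < dy / D * D := by
              apply mul_lt_mul_of_pos_left hvn (by positivity)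
          _ = dy := by field_simp
    have hco : a * (dx / D) + b * (dy / D) = 1 := by
      field_simp
      exact hDdef.symm
    have hcombo : a • z₁ + b • z₂ = w := by
      calc a • z₁ + b • z₂
          = (a • x + b • y) + (a * (dx / D) + b * (dy / D)) • v := by
            rw [hz₁, hz₂]; module
        _ = (a • x + b • y) + (1 : ℝ) • v := by rw [hco]
        _ = w := by rw [hv]; simp
    have : w ∈ interior Ω :=
      hcombo ▸ hΩc.combo_interior_closure_mem_interior hz₁Ω hz₂Ω ha hb hab
    exact hw (interior_subset this)
  refine ⟨hΩc.closure, ?_⟩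
  intro x hx y hy a b ha hb hab
  simp only [smul_eq_mul]
  set dx := infDist x Ωᶜ with hdx
  set dy := infDist y Ωᶜ with hdy
  have hdx0 : 0 ≤ dx := infDist_nonneg
  have hdy0 : 0 ≤ dy := infDist_nonneg
  rcases eq_or_lt_of_le (show (0:ℝ) ≤ a * dx + b * dy by positivity) with hD0 | hDpos
  · rw [← hD0]; exact infDist_nonneg
  have hle : ∀ w ∈ Ωᶜ, a * dx + b * dy ≤ dist (a • x + b • y) w := by
    rcases lt_or_ge 0 (a * dx) with hadx | hadx
    · exact key x y a b hy (by nlinarith) hb hab hadx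
    · have hbdy : 0 < b * dy := by nlinarith [mul_nonneg ha hdx0]
      intro w hw
      have := key y x b a hx (by nlinarith) ha (by linarith) hbdy w hw
      calc a * dx + b * dy ≤ b * dy + a * dx := by ring_nf; rfl
        _ ≤ dist (b • y + a • x) w := by
            have h0 : a * dx = 0 := le_antisymm hadx (by positivity)
            rw [h0] at this ⊢; linarith [this]
        _ = dist (a • x + b • y) w := by rw [add_comm]
  have hne : Ωᶜ.Nonempty := by
    rcases Set.eq_empty_or_nonempty Ωᶜ with hc | hc
    · exfalso
      have h1 : dx = 0 := hdx.trans (by rw [hc]; exact infDist_empty)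
      have h2 : dy = 0 := hdy.trans (by rw [hc]; exact infDist_empty)
      rw [h1, h2] at hDpos
      simp at hDpos
    · exact hc
  by_contra hcon
  push_neg at hcon
  obtain ⟨w, hw, hdw⟩ := (infDist_lt_iff hne).1 hcon
  exact absurd hdw (not_lt.2 (hle w hw))

/-- Extension lemma for concave functions: a nonnegative concave function on `closure Ω`
can be modified outside `closure Θ` so as to vanish on `∂Ω` while staying concave. -/
theorem stmt5 (n : ℕ) (Ω Θ : Set (EuclideanSpace ℝ (Fin (n + 1))))
    (hΩo : IsOpen Ω) (hΩb : Bornology.IsBounded Ω) (hΩc : Convex ℝ Ω)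
    (hΘo : IsOpen Θ) (hΘb : Bornology.IsBounded Θ) (hΘc : Convex ℝ Θ)
    (hΘΩ : closure Θ ⊆ Ω)
    (Φ : EuclideanSpace ℝ (Fin (n + 1)) → ℝ) (hΦ : ConcaveOn ℝ (closure Ω) Φ)
    (hΦ0 : ∀ x ∈ closure Ω, 0 ≤ Φ x) :
    ∃ Φt : EuclideanSpace ℝ (Fin (n + 1)) → ℝ,
      ConcaveOn ℝ (closure Ω) Φt ∧ (∀ x ∈ closure Ω, 0 ≤ Φt x) ∧
        (∀ x ∈ closure Θ, Φt x = Φ x) ∧ ∀ x ∈ frontier Ω, Φt x = 0 := by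
  set d : EuclideanSpace ℝ (Fin (n + 1)) → ℝ := fun x => Metric.infDist x Ωᶜ with hd
  have hdconc : ConcaveOn ℝ (closure Ω) d := infDist_compl_concave hΩo hΩc
  have hd0 : ∀ x, 0 ≤ d x := fun x => Metric.infDist_nonneg
  -- choose the scaling constant
  have hkey : ∃ c : ℝ, 0 ≤ c ∧ ∀ x ∈ closure Θ, Φ x ≤ c * d x := by
    rcases Set.eq_empty_or_nonempty (closure Θ) with hK | hK
    · exact ⟨0, le_refl 0, by rw [hK]; simp⟩
    · have hKc : IsCompact (closure Θ) := hΘb.isCompact_closure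
      -- Φ is continuous on Ω
      have hΦc : ContinuousOn Φ Ω :=
        (hΦ.subset subset_closure hΩc).continuousOn hΩo
      have hΦK : ContinuousOn Φ (closure Θ) := hΦc.mono hΘΩ
      have hdc : Continuous d := Metric.continuous_infDist_pt _
      obtain ⟨xM, hxM, hM⟩ := hKc.exists_isMaxOn hK hΦK
      obtain ⟨xδ, hxδ, hδ⟩ := hKc.exists_isMinOn hK hdc.continuousOn
      set M := Φ xM with hMdef
      set δ := d xδ with hδdef
      have hΩcompl : Ωᶜ.Nonempty := by
        rcases Set.eq_empty_or_nonempty Ωᶜ with hc | hc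
        · exfalso
          have : Ω = Set.univ := by rw [← compl_compl Ω, hc, compl_empty]
          rw [this] at hΩb
          obtain ⟨r, hr⟩ := hΩb.subset_closedBall 0
          set y : EuclideanSpace ℝ (Fin (n+1)) := EuclideanSpace.single 0 (|r| + 1) with hy
          have h1 : ‖y‖ = |r| + 1 := by
            rw [hy, EuclideanSpace.norm_single]
            simp [abs_of_nonneg (by positivity : (0:ℝ) ≤ |r| + 1)]
          have h2 : y ∈ Metric.closedBall 0 r := hr (Set.mem_univ y)
          rw [Metric.mem_closedBall, dist_zero_right, h1] at h2
          have := abs_nonneg r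
          have := le_abs_self r
          linarith
        · exact hc
      have hδpos : 0 < δ := by
        rw [hδdef, hd]
        have hx : xδ ∈ Ω := hΘΩ hxδ
        rw [← (isClosed_compl_iff.2 hΩo).notMem_iff_infDist_pos hΩcompl]
        simpa using hx
      have hM0 : 0 ≤ M := hΦ0 xM (subset_closure (hΘΩ hxM))
      refine ⟨M / δ, by positivity, fun x hx => ?_⟩
      calc Φ x ≤ M := hM hx
        _ = M / δ * δ := by field_simp
        _ ≤ M / δ * d x := by
            apply mul_le_mul_of_nonneg_left (hδ hx) (by positivity)
  obtain ⟨c, hc0, hcd⟩ := hkey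
  refine ⟨fun x => min (Φ x) (c * d x), ?_, ?_, ?_, ?_⟩
  · have h1 : ConcaveOn ℝ (closure Ω) (c • d) := hdconc.smul hc0
    have h2 := hΦ.inf h1
    have heq : (Φ ⊓ c • d) = fun x => min (Φ x) (c * d x) := by
      funext x
      simp [Pi.inf_apply, Pi.smul_apply, smul_eq_mul]
    rwa [heq] at h2
  · intro x hx
    exact le_min (hΦ0 x hx) (mul_nonneg hc0 (hd0 x))
  · intro x hx
    exact min_eq_left (hcd x hx)
  · intro x hx
    have hxc : x ∈ Ωᶜ := fun hxo => (hΩo.frontier_eq ▸ hx).2 hxo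
    have hdx : d x = 0 := Metric.infDist_zero_of_mem hxc
    have hΦx : 0 ≤ Φ x := hΦ0 x (hΩo.frontier_eq ▸ hx).1
    show min (Φ x) (c * d x) = 0
    rw [hdx, mul_zero]
    exact min_eq_right hΦx
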